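/- Let P, Q ∈ A₁(K) with [Q,P] = 1, where K has characteristic zero. Writing elements of A₁(K) in the normal form Σ a_{ij} x^i y^j, if the (1,0)-leading term of Q (the sum of monomials of maximal x-degree) equals λ x^s y for some λ ∈ K*, then s = 0. -/

import Mathlib

open scoped BigOperators

variable (K : Type*) [Field K]

/-- Defining relation of the first Weyl algebra: `y*x = x*y + 1`. -/
inductive WeylRel : FreeAlgebra K (Fin 2) → FreeAlgebra K (Fin 2) → Prop
  | rel : WeylRel (FreeAlgebra.ι K 1 * FreeAlgebra.ι K 0) (FreeAlgebra.ι K 0 * FreeAlgebra.ι K 1 + 1)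

/-- The first Weyl algebra `A₁(K) = K⟨x,y⟩/(yx - xy - 1)`. -/
abbrev Weyl := RingQuot (WeylRel K)

/-- The generator `x` of `A₁(K)`. -/
abbrev wx : Weyl K := RingQuot.mkAlgHom K (WeylRel K) (FreeAlgebra.ι K 0)

/-- The generator `y` of `A₁(K)`. -/
abbrev wy : Weyl K := RingQuot.mkAlgHom K (WeylRel K) (FreeAlgebra.ι K 1)

/-! Filter `A₁(K)` by `x`-degree and let `σₙ(w) = xCoeff n w ∈ K[y]` be the coefficient of `xⁿ`
in the normal form of `w`. The symbols multiply like commutative polynomials, and the top symbol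
of a commutator is a Poisson bracket: if `Q = λ xˢ y + (lower)` with `s ≥ 1` and `P` has
`x`-degree `t` with top symbol `g`, then `σ_{s+t-1}[Q, P] = λ (t g - s y g')`. For `[Q, P] = 1`
this vanishes unless `s = 1, t = 0`, where comparing constant terms gives `1 = 0`. So
`t g = s y g'`, which forces `g = c yʲ` with `t = s j`; then `P - (c / λʲ) Qʲ` still has
`[Q, ·] = 1` but lower `x`-degree. Descending to `x`-degree `-1` leaves `P = 0`, a contradiction. -/

namespace Polynomial

theorem coeff_X_mul_derivative {R : Type*} [CommSemiring R] (g : R[X]) (k : ℕ) :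
    (X * derivative g).coeff k = k * g.coeff k := by
  rcases k with _ | k
  · simp
  · rw [coeff_X_mul, coeff_derivative, mul_comm]
    push_cast
    ring

theorem coeff_eq_zero_of_smul_eq_smul_X_mul_derivative {R : Type*} [CommRing R] [IsDomain R]
    [CharZero R] {g : R[X]} {t n k : ℕ} (h : (t : R) • g = (n : R) • (X * derivative g))
    (hk : t ≠ n * k) : g.coeff k = 0 := by
  have hcoeff := congrArg (coeff · k) h
  simp only [coeff_smul, coeff_X_mul_derivative, smul_eq_mul, ← mul_assoc] at hcoeff
  by_contra hne
  exact hk (by exact_mod_cast mul_right_cancel₀ hne hcoeff)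

end Polynomial

theorem Ring.lie_mul_left {R : Type*} [Ring R] (a b c : R) :
    ⁅a * b, c⁆ = a * ⁅b, c⁆ + ⁅a, c⁆ * b := by
  simp only [Ring.lie_def]; noncomm_ring

theorem Ring.lie_mul_right {R : Type*} [Ring R] (a b c : R) :
    ⁅a, b * c⁆ = ⁅a, b⁆ * c + b * ⁅a, c⁆ := by
  simp only [Ring.lie_def]; noncomm_ring

namespace Weyl

open Polynomial

variable {K}

theorem lie_wy_wx : ⁅wy K, wx K⁆ = 1 := by
  have := RingQuot.mkAlgHom_rel K (WeylRel.rel (K := K))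
  simp only [map_mul, map_add, map_one] at this
  rw [Ring.lie_def, this, add_sub_cancel_left]

theorem lie_wy_wx_pow (i : ℕ) : ⁅wy K, wx K ^ i⁆ = (i : K) • wx K ^ (i - 1) := by
  induction i with
  | zero => simp [Ring.lie_def]
  | succ i ih =>
    rw [pow_succ, Ring.lie_mul_right, ih, lie_wy_wx, mul_one, smul_mul_assoc, ← pow_succ]
    rcases i with _ | i
    · simp
    · push_cast; simp only [add_smul, one_smul]

theorem lie_wy_pow_wx (j : ℕ) : ⁅wy K ^ j, wx K⁆ = (j : K) • wy K ^ (j - 1) := by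
  induction j with
  | zero => simp [Ring.lie_def]
  | succ j ih =>
    rw [pow_succ', Ring.lie_mul_left, ih, lie_wy_wx, one_mul, mul_smul_comm, ← pow_succ']
    rcases j with _ | j
    · simp
    · push_cast; simp only [add_smul, one_smul]

/-- `A₁(K)` acts on `K[Y][X]` by `x ↦ X·` and `y ↦ Y· + ∂/∂X`; applied to `1` this sends the
normal-form monomial `x^i y^j` to `X^i Y^j`, which makes normal-form coefficients computable. -/
noncomputable def normalFormRep : Weyl K →ₐ[K] Module.End K K[X][X] :=
  RingQuot.liftAlgHom K ⟨FreeAlgebra.lift K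
    ![LinearMap.mulLeft K X, LinearMap.mulLeft K (C X) + derivative.restrictScalars K], by
    rintro _ _ ⟨⟩
    ext f : 1
    simp only [map_mul, map_add, map_one, FreeAlgebra.lift_ι_apply, Matrix.cons_val_one,
      Matrix.cons_val_fin_one, Matrix.cons_val_zero, Module.End.mul_apply, Module.End.one_apply,
      LinearMap.mulLeft_apply, LinearMap.add_apply, LinearMap.coe_restrictScalars,
      derivative_mul, derivative_X, one_mul]
    ring⟩

theorem normalFormRep_wx : normalFormRep (wx K) = LinearMap.mulLeft K X := by
  simp [normalFormRep]

theorem normalFormRep_wy :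
    normalFormRep (wy K) = LinearMap.mulLeft K (C X) + derivative.restrictScalars K := by
  simp [normalFormRep]

noncomputable def normalForm : Weyl K →ₗ[K] K[X][X] :=
  LinearMap.applyₗ 1 ∘ₗ normalFormRep.toLinearMap

theorem normalForm_apply (w : Weyl K) : normalForm w = normalFormRep w 1 := rfl

theorem normalForm_wx_pow_mul (n : ℕ) (w : Weyl K) :
    normalForm (wx K ^ n * w) = X ^ n * normalForm w := by
  simp [normalForm_apply, normalFormRep_wx, LinearMap.pow_mulLeft, Module.End.mul_apply]

theorem normalForm_wy_pow (j : ℕ) : normalForm (wy K ^ j) = C (X ^ j) := by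
  induction j with
  | zero => simp [normalForm_apply]
  | succ j ih =>
    rw [normalForm_apply, pow_succ', map_mul, Module.End.mul_apply, ← normalForm_apply, ih,
      normalFormRep_wy]
    simp only [LinearMap.add_apply, LinearMap.mulLeft_apply, LinearMap.restrictScalars_apply,
      derivative_C, add_zero, ← C_mul, ← pow_succ']

/-- The coefficient of `x^n` in the normal form, as a polynomial in which `X` stands for `y`. -/
noncomputable def xCoeff (n : ℕ) : Weyl K →ₗ[K] K[X] :=
  (lcoeff K[X] n).restrictScalars K ∘ₗ normalForm

theorem xCoeff_apply (n : ℕ) (w : Weyl K) : xCoeff n w = (normalForm w).coeff n := rfl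

theorem xCoeff_wx_pow_mul (n d : ℕ) (w : Weyl K) :
    xCoeff d (wx K ^ n * w) = if n ≤ d then xCoeff (d - n) w else 0 := by
  simp only [xCoeff_apply, normalForm_wx_pow_mul, coeff_X_pow_mul']

theorem xCoeff_wx_mul (d : ℕ) (w : Weyl K) : xCoeff (d + 1) (wx K * w) = xCoeff d w := by
  simpa using xCoeff_wx_pow_mul 1 (d + 1) w

theorem xCoeff_monomial (n i j : ℕ) :
    xCoeff n (wx K ^ i * wy K ^ j) = if i = n then X ^ j else 0 := by
  rw [xCoeff_apply, normalForm_wx_pow_mul, normalForm_wy_pow, coeff_X_pow_mul', coeff_C]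
  split_ifs <;> first | rfl | omega

theorem xCoeff_one (n : ℕ) : xCoeff n (1 : Weyl K) = if n = 0 then 1 else 0 := by
  simpa [eq_comm] using xCoeff_monomial (K := K) n 0 0

instance : Nontrivial (Weyl K) :=
  ⟨⟨0, 1, fun h => by simpa [xCoeff_one] using congrArg (xCoeff 0) h⟩⟩

/-- Indexed by `ℤ` so that `xDegreeLE (-1) = ⊥`. -/
def xDegreeLE (n : ℤ) : Submodule K (Weyl K) :=
  Submodule.span K {w | ∃ i j : ℕ, (i : ℤ) ≤ n ∧ w = wx K ^ i * wy K ^ j}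

theorem xDegreeLE_le_iff {n : ℤ} {N : Submodule K (Weyl K)} :
    xDegreeLE n ≤ N ↔ ∀ i j : ℕ, (i : ℤ) ≤ n → wx K ^ i * wy K ^ j ∈ N := by
  simp only [xDegreeLE, Submodule.span_le, Set.subset_def, SetLike.mem_coe]
  exact ⟨fun h i j hi => h _ ⟨i, j, hi, rfl⟩, fun h _ ⟨i, j, hi, hw⟩ => hw ▸ h i j hi⟩

theorem monomial_mem_xDegreeLE {n : ℤ} {i : ℕ} (j : ℕ) (hi : (i : ℤ) ≤ n) :
    wx K ^ i * wy K ^ j ∈ xDegreeLE n :=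
  Submodule.subset_span ⟨i, j, hi, rfl⟩

theorem wx_pow_mem_xDegreeLE (i : ℕ) : wx K ^ i ∈ xDegreeLE i := by
  simpa using monomial_mem_xDegreeLE (K := K) 0 le_rfl

theorem wy_pow_mem_xDegreeLE (j : ℕ) : wy K ^ j ∈ xDegreeLE 0 := by
  simpa using monomial_mem_xDegreeLE (K := K) (i := 0) j le_rfl

theorem one_mem_xDegreeLE {n : ℤ} (hn : 0 ≤ n) : (1 : Weyl K) ∈ xDegreeLE n := by
  simpa using monomial_mem_xDegreeLE (K := K) (i := 0) 0 hn

theorem xDegreeLE_mono : Monotone (xDegreeLE (K := K)) := fun _ _ hmn =>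
  xDegreeLE_le_iff.2 fun _ j hi => monomial_mem_xDegreeLE j (hi.trans hmn)

theorem xDegreeLE_eq_bot {n : ℤ} (hn : n < 0) : xDegreeLE (K := K) n = ⊥ :=
  eq_bot_iff.2 <| xDegreeLE_le_iff.2 fun i _ hi => by omega

theorem wy_mul_mem_xDegreeLE {n : ℤ} {w : Weyl K} (hw : w ∈ xDegreeLE n) :
    wy K * w ∈ xDegreeLE n := by
  refine xDegreeLE_le_iff (N := (xDegreeLE n).comap (LinearMap.mulLeft K (wy K))).2
    (fun i j hi => ?_) hw
  have hmul : wy K * (wx K ^ i * wy K ^ j) =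
      wx K ^ i * wy K ^ (j + 1) + (i : K) • (wx K ^ (i - 1) * wy K ^ j) := by
    rw [← smul_mul_assoc, ← lie_wy_wx_pow, Ring.lie_def, sub_mul, pow_succ']
    simp only [mul_assoc]
    abel
  rw [Submodule.mem_comap, LinearMap.mulLeft_apply, hmul]
  exact add_mem (monomial_mem_xDegreeLE _ hi)
    (Submodule.smul_mem _ _ (monomial_mem_xDegreeLE _ (by omega)))

theorem wx_pow_mul_mem_xDegreeLE {n : ℤ} {w : Weyl K} (k : ℕ) (hw : w ∈ xDegreeLE n) :
    wx K ^ k * w ∈ xDegreeLE (k + n) := by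
  refine xDegreeLE_le_iff
    (N := (xDegreeLE (k + n)).comap (LinearMap.mulLeft K (wx K ^ k))).2 (fun i j hi => ?_) hw
  rw [Submodule.mem_comap, LinearMap.mulLeft_apply, ← mul_assoc, ← pow_add]
  exact monomial_mem_xDegreeLE _ (by push_cast; omega)

theorem mul_mem_xDegreeLE {m n : ℤ} {u w : Weyl K} (hu : u ∈ xDegreeLE m)
    (hw : w ∈ xDegreeLE n) : u * w ∈ xDegreeLE (m + n) := by
  refine xDegreeLE_le_iff (N := (xDegreeLE (m + n)).comap (LinearMap.mulRight K w)).2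
    (fun i j hi => ?_) hu
  have hyw : wy K ^ j * w ∈ xDegreeLE n := by
    induction j with
    | zero => simpa using hw
    | succ j ih => rw [pow_succ', mul_assoc]; exact wy_mul_mem_xDegreeLE ih
  rw [Submodule.mem_comap, LinearMap.mulRight_apply, mul_assoc]
  exact xDegreeLE_mono (by omega) (wx_pow_mul_mem_xDegreeLE i hyw)

theorem exists_mem_xDegreeLE (w : Weyl K) : ∃ n : ℕ, w ∈ xDegreeLE n := by
  obtain ⟨w, rfl⟩ := RingQuot.mkAlgHom_surjective K (WeylRel K) w
  induction w using FreeAlgebra.induction with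
  | grade0 r =>
    refine ⟨0, ?_⟩
    rw [AlgHom.commutes, Algebra.algebraMap_eq_smul_one]
    exact Submodule.smul_mem _ _ (one_mem_xDegreeLE le_rfl)
  | grade1 i =>
    refine ⟨1, ?_⟩
    fin_cases i
    · simpa using monomial_mem_xDegreeLE (K := K) (i := 1) 0 le_rfl
    · simpa using monomial_mem_xDegreeLE (K := K) (i := 0) 1 zero_le_one
  | mul u v hu hv =>
    obtain ⟨m, hm⟩ := hu
    obtain ⟨n, hn⟩ := hv
    exact ⟨m + n, by rw [map_mul]; exact_mod_cast mul_mem_xDegreeLE hm hn⟩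
  | add u v hu hv =>
    obtain ⟨m, hm⟩ := hu
    obtain ⟨n, hn⟩ := hv
    refine ⟨max m n, ?_⟩
    rw [map_add]
    exact add_mem (xDegreeLE_mono (by omega) hm) (xDegreeLE_mono (by omega) hn)

theorem linearMap_ext {M : Type*} [AddCommGroup M] [Module K M] {f g : Weyl K →ₗ[K] M}
    (h : ∀ i j : ℕ, f (wx K ^ i * wy K ^ j) = g (wx K ^ i * wy K ^ j)) : f = g := by
  ext w
  obtain ⟨n, hw⟩ := exists_mem_xDegreeLE w
  exact xDegreeLE_le_iff (N := LinearMap.eqLocus f g).2 (fun i j _ => h i j) hw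

theorem lie_mem_comm {a b : Weyl K} {N : Submodule K (Weyl K)} : ⁅a, b⁆ ∈ N ↔ ⁅b, a⁆ ∈ N := by
  rw [Ring.lie_def, Ring.lie_def, sub_mem_comm_iff]

theorem lie_wy_monomial (i j : ℕ) :
    ⁅wy K, wx K ^ i * wy K ^ j⁆ = (i : K) • (wx K ^ (i - 1) * wy K ^ j) := by
  rw [Ring.lie_mul_right, lie_wy_wx_pow, (Commute.self_pow (wy K) j).lie_eq, mul_zero, add_zero,
    smul_mul_assoc]

theorem lie_monomial_wx (i j : ℕ) :
    ⁅wx K ^ i * wy K ^ j, wx K⁆ = (j : K) • (wx K ^ i * wy K ^ (j - 1)) := by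
  rw [Ring.lie_mul_left, lie_wy_pow_wx, (Commute.self_pow (wx K) i).symm.lie_eq, zero_mul,
    add_zero, mul_smul_comm]

theorem lie_mem_of_forall_monomial {n : ℤ} {u w : Weyl K} {N : Submodule K (Weyl K)}
    (hw : w ∈ xDegreeLE n) (h : ∀ i j : ℕ, (i : ℤ) ≤ n → ⁅u, wx K ^ i * wy K ^ j⁆ ∈ N) :
    ⁅u, w⁆ ∈ N := by
  have := xDegreeLE_le_iff (N := N.comap (LinearMap.mulLeft K u - LinearMap.mulRight K u)).2
    (by simpa [Ring.lie_def] using h) hw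
  simpa [Ring.lie_def] using this

theorem lie_wy_mem_xDegreeLE {n : ℤ} {w : Weyl K} (hw : w ∈ xDegreeLE n) :
    ⁅wy K, w⁆ ∈ xDegreeLE (n - 1) :=
  lie_mem_of_forall_monomial hw fun i j hi => by
    rw [lie_wy_monomial]
    rcases i with _ | i
    · simp
    · exact Submodule.smul_mem _ _ (monomial_mem_xDegreeLE _ (by push_cast at hi ⊢; omega))

theorem lie_wx_mem_xDegreeLE {n : ℤ} {w : Weyl K} (hw : w ∈ xDegreeLE n) :
    ⁅w, wx K⁆ ∈ xDegreeLE n :=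
  lie_mem_comm.1 <| lie_mem_of_forall_monomial hw fun i j hi => lie_mem_comm.1 <| by
    rw [lie_monomial_wx]
    exact Submodule.smul_mem _ _ (monomial_mem_xDegreeLE _ hi)

theorem lie_mem_xDegreeLE {m n : ℤ} {u w : Weyl K} (hu : u ∈ xDegreeLE m)
    (hw : w ∈ xDegreeLE n) : ⁅u, w⁆ ∈ xDegreeLE (m + n - 1) := by
  have hux (a : ℕ) : ⁅u, wx K ^ a⁆ ∈ xDegreeLE (m + a - 1) := by
    induction a with
    | zero => simp [Ring.lie_def]
    | succ a ih =>
      rw [pow_succ, Ring.lie_mul_right]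
      have h₁ := mul_mem_xDegreeLE ih (wx_pow_mem_xDegreeLE 1)
      rw [pow_one] at h₁
      have h₂ := mul_mem_xDegreeLE (wx_pow_mem_xDegreeLE a) (lie_wx_mem_xDegreeLE hu)
      refine add_mem (xDegreeLE_mono ?_ h₁) (xDegreeLE_mono ?_ h₂) <;> push_cast <;> omega
  have huy (b : ℕ) : ⁅u, wy K ^ b⁆ ∈ xDegreeLE (m - 1) := by
    induction b with
    | zero => simp [Ring.lie_def]
    | succ b ih =>
      rw [pow_succ, Ring.lie_mul_right]
      have h₁ := mul_mem_xDegreeLE ih (wy_pow_mem_xDegreeLE 1)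
      have h₂ := mul_mem_xDegreeLE (wy_pow_mem_xDegreeLE b)
        (lie_mem_comm.1 (lie_wy_mem_xDegreeLE hu))
      rw [pow_one, add_zero] at h₁; rw [zero_add] at h₂
      exact add_mem h₁ h₂
  refine lie_mem_of_forall_monomial hw fun a b ha => ?_
  rw [Ring.lie_mul_right]
  have h₁ := mul_mem_xDegreeLE (hux a) (wy_pow_mem_xDegreeLE b)
  have h₂ := mul_mem_xDegreeLE (wx_pow_mem_xDegreeLE a) (huy b)
  refine add_mem (xDegreeLE_mono ?_ h₁) (xDegreeLE_mono ?_ h₂) <;> omega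

theorem xCoeff_eq_zero_of_mem {m : ℤ} {d : ℕ} {w : Weyl K} (hw : w ∈ xDegreeLE m)
    (hmd : m < d) : xCoeff d w = 0 := by
  refine xDegreeLE_le_iff (N := LinearMap.ker (xCoeff d)).2 (fun i j hi => ?_) hw
  rw [LinearMap.mem_ker, xCoeff_monomial, if_neg (by omega)]

theorem sub_wx_pow_mul_aeval_xCoeff_mem {t : ℕ} {w : Weyl K} (hw : w ∈ xDegreeLE t) :
    w - wx K ^ t * aeval (wy K) (xCoeff t w) ∈ xDegreeLE (t - 1) := by
  refine xDegreeLE_le_iff (N := (xDegreeLE (t - 1)).comap (LinearMap.id -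
    LinearMap.mulLeft K (wx K ^ t) ∘ₗ (aeval (wy K)).toLinearMap ∘ₗ xCoeff t)).2
    (fun i j hi => ?_) hw
  simp only [Submodule.mem_comap, LinearMap.sub_apply, LinearMap.id_apply, LinearMap.comp_apply,
    AlgHom.toLinearMap_apply, LinearMap.mulLeft_apply, xCoeff_monomial]
  split_ifs with hit
  · rw [hit, aeval_X_pow, sub_self]
    exact zero_mem _
  · rw [map_zero, mul_zero, sub_zero]
    exact monomial_mem_xDegreeLE _ (by omega)

theorem mem_xDegreeLE_sub_one_of_xCoeff_eq_zero {t : ℕ} {w : Weyl K} (hw : w ∈ xDegreeLE t)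
    (h : xCoeff t w = 0) : w ∈ xDegreeLE (t - 1) := by
  simpa [h] using sub_wx_pow_mul_aeval_xCoeff_mem hw

theorem xCoeff_mul {m n : ℕ} {u w : Weyl K} (hu : u ∈ xDegreeLE m) (hw : w ∈ xDegreeLE n) :
    xCoeff (m + n) (u * w) = xCoeff m u * xCoeff n w := by
  suffices h : ∀ a b c d : ℕ, a ≤ m → c ≤ n →
      xCoeff (m + n) (wx K ^ a * wy K ^ b * (wx K ^ c * wy K ^ d)) =
        xCoeff m (wx K ^ a * wy K ^ b) * xCoeff n (wx K ^ c * wy K ^ d) by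
    refine xDegreeLE_le_iff (N := LinearMap.eqLocus (xCoeff (m + n) ∘ₗ LinearMap.mulRight K w)
      ((LinearMap.mulRight K[X] (xCoeff n w)).restrictScalars K ∘ₗ xCoeff m)).2
      (fun a b ha => ?_) hu
    refine xDegreeLE_le_iff (N := LinearMap.eqLocus
      (xCoeff (m + n) ∘ₗ LinearMap.mulLeft K (wx K ^ a * wy K ^ b))
      ((LinearMap.mulLeft K[X] (xCoeff m (wx K ^ a * wy K ^ b))).restrictScalars K ∘ₗ
        xCoeff n)).2 (fun c d hc => ?_) hw
    exact h a b c d (by omega) (by omega)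
  intro a b c d ha hc
  have hsplit : wx K ^ a * wy K ^ b * (wx K ^ c * wy K ^ d) =
      wx K ^ (a + c) * wy K ^ (b + d) + wx K ^ a * ⁅wy K ^ b, wx K ^ c⁆ * wy K ^ d := by
    rw [Ring.lie_def]
    simp only [pow_add, mul_sub, sub_mul, mul_assoc]
    abel
  have hlower := mul_mem_xDegreeLE (mul_mem_xDegreeLE (wx_pow_mem_xDegreeLE a)
    (lie_mem_xDegreeLE (wy_pow_mem_xDegreeLE (K := K) b) (wx_pow_mem_xDegreeLE c)))
    (wy_pow_mem_xDegreeLE d)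
  rw [hsplit, map_add, xCoeff_eq_zero_of_mem hlower (by push_cast; omega), add_zero,
    xCoeff_monomial, xCoeff_monomial, xCoeff_monomial]
  split_ifs <;> first | omega | simp [pow_add]

theorem xCoeff_lie_wy (d : ℕ) (w : Weyl K) :
    xCoeff d ⁅wy K, w⁆ = ((d + 1 : ℕ) : K) • xCoeff (d + 1) w := by
  have := linearMap_ext
    (f := xCoeff d ∘ₗ (LinearMap.mulLeft K (wy K) - LinearMap.mulRight K (wy K)))
    (g := ((d + 1 : ℕ) : K) • xCoeff (d + 1)) fun i j => by
      simp only [LinearMap.comp_apply, LinearMap.sub_apply, LinearMap.mulLeft_apply,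
        LinearMap.mulRight_apply, ← Ring.lie_def, lie_wy_monomial, map_smul,
        LinearMap.smul_apply, xCoeff_monomial]
      rcases i with _ | i
      · simp
      · simp only [add_tsub_cancel_right, add_left_inj]
        split_ifs with h <;> simp [h]
  simpa [Ring.lie_def] using LinearMap.congr_fun this w

theorem xCoeff_lie_wx (d : ℕ) (w : Weyl K) :
    xCoeff d ⁅w, wx K⁆ = derivative (xCoeff d w) := by
  have := linearMap_ext
    (f := xCoeff d ∘ₗ (LinearMap.mulRight K (wx K) - LinearMap.mulLeft K (wx K)))
    (g := derivative.restrictScalars K ∘ₗ xCoeff d) fun i j => by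
      simp only [LinearMap.comp_apply, LinearMap.sub_apply, LinearMap.mulLeft_apply,
        LinearMap.mulRight_apply, ← Ring.lie_def, lie_monomial_wx, map_smul,
        LinearMap.restrictScalars_apply, xCoeff_monomial]
      split_ifs <;> simp [derivative_X_pow, Polynomial.smul_eq_C_mul]
  simpa [Ring.lie_def] using LinearMap.congr_fun this w

theorem xCoeff_lie_comm (d : ℕ) (u w : Weyl K) : xCoeff d ⁅u, w⁆ = -xCoeff d ⁅w, u⁆ := by
  rw [Ring.lie_def, Ring.lie_def, map_sub, map_sub, neg_sub]

theorem coeff_xCoeff_sum (a : (ℕ × ℕ) →₀ K) (n k : ℕ) :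
    (xCoeff n (∑ p ∈ a.support, a p • (wx K ^ p.1 * wy K ^ p.2))).coeff k = a (n, k) := by
  simp only [map_sum, map_smul, xCoeff_monomial, finsetSum_coeff, coeff_smul, smul_eq_mul]
  rw [Finset.sum_eq_single (n, k)]
  · simp
  · rintro ⟨i, j⟩ - hp
    split_ifs with hi
    · subst hi
      rw [coeff_X_pow, if_neg (by rintro rfl; exact hp rfl), mul_zero]
    · rw [coeff_zero, mul_zero]
  · intro hnk
    rw [Finsupp.notMem_support_iff.1 hnk, zero_mul]

theorem pow_mem_xDegreeLE {m : ℕ} {Q : Weyl K} (hQ : Q ∈ xDegreeLE m) (j : ℕ) :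
    Q ^ j ∈ xDegreeLE (m * j : ℕ) := by
  induction j with
  | zero => simpa using one_mem_xDegreeLE (K := K) le_rfl
  | succ j ih => rw [pow_succ, mul_add_one]; exact_mod_cast mul_mem_xDegreeLE ih hQ

theorem xCoeff_pow {m : ℕ} {Q : Weyl K} (hQ : Q ∈ xDegreeLE m) (j : ℕ) :
    xCoeff (m * j) (Q ^ j) = xCoeff m Q ^ j := by
  induction j with
  | zero => simpa using xCoeff_one (K := K) 0
  | succ j ih => rw [pow_succ, mul_add_one, xCoeff_mul (pow_mem_xDegreeLE hQ j) hQ, ih, pow_succ]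

theorem xCoeff_lie_wx_pow {t : ℕ} {P : Weyl K} (hP : P ∈ xDegreeLE t) (s : ℕ) :
    xCoeff (s + t) ⁅P, wx K ^ (s + 1)⁆ = ((s + 1 : ℕ) : K) • derivative (xCoeff t P) := by
  induction s with
  | zero => simp [xCoeff_lie_wx]
  | succ s ih =>
    rw [pow_succ', Ring.lie_mul_right, map_add, show s + 1 + t = t + (s + 1) by ring,
      xCoeff_mul (lie_wx_mem_xDegreeLE hP) (wx_pow_mem_xDegreeLE (s + 1)), xCoeff_lie_wx,
      show t + (s + 1) = s + t + 1 by ring, xCoeff_wx_mul, ih]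
    have hx : xCoeff (s + 1) (wx K ^ (s + 1)) = 1 := by
      simpa using xCoeff_monomial (K := K) (s + 1) (s + 1) 0
    rw [hx, mul_one]
    push_cast
    module

theorem xCoeff_lie_wx_pow_mul_wy {t : ℕ} {P : Weyl K} (hP : P ∈ xDegreeLE t) (s : ℕ) :
    xCoeff (s + t) ⁅wx K ^ (s + 1) * wy K, P⁆ =
      (t : K) • xCoeff t P - ((s + 1 : ℕ) : K) • (X * derivative (xCoeff t P)) := by
  have hlie : ⁅wx K ^ (s + 1), P⁆ ∈ xDegreeLE (s + t : ℕ) := by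
    simpa [add_right_comm] using lie_mem_xDegreeLE (wx_pow_mem_xDegreeLE (K := K) (s + 1)) hP
  have hyF : wy K ∈ xDegreeLE ((0 : ℕ) : ℤ) := by simpa using wy_pow_mem_xDegreeLE (K := K) 1
  have hy : xCoeff 0 (wy K) = X := by simpa using xCoeff_monomial (K := K) 0 0 1
  have hyP : xCoeff (s + t) (wx K ^ (s + 1) * ⁅wy K, P⁆) = (t : K) • xCoeff t P := by
    rw [xCoeff_wx_pow_mul]
    rcases t with _ | t
    · simp
    · rw [if_pos (by omega), show s + (t + 1) - (s + 1) = t by omega, xCoeff_lie_wy]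
  rw [Ring.lie_mul_left, map_add, hyP, ← add_zero (s + t), xCoeff_mul hlie hyF, hy,
    xCoeff_lie_comm, xCoeff_lie_wx_pow hP, neg_mul, smul_mul_assoc, mul_comm, sub_eq_add_neg]

section LeadingTerm

variable {s : ℕ} {lam : K} {Q : Weyl K}

theorem xCoeff_lie_of_xCoeff_eq_smul_X (hQ : Q ∈ xDegreeLE (s + 1 : ℕ))
    (hQσ : xCoeff (s + 1) Q = lam • X) {t : ℕ} {P : Weyl K} (hP : P ∈ xDegreeLE t) :
    xCoeff (s + t) ⁅Q, P⁆ =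
      lam • ((t : K) • xCoeff t P - ((s + 1 : ℕ) : K) • (X * derivative (xCoeff t P))) := by
  set R := Q - lam • (wx K ^ (s + 1) * wy K)
  have hR : R ∈ xDegreeLE s := by
    have hmon : wx K ^ (s + 1) * wy K ∈ xDegreeLE (s + 1 : ℕ) := by
      simpa using monomial_mem_xDegreeLE (K := K) (n := (s + 1 : ℕ)) 1 le_rfl
    have hRσ : xCoeff (s + 1) R = 0 := by
      have hm : xCoeff (s + 1) (wx K ^ (s + 1) * wy K) = X := by
        simpa using xCoeff_monomial (K := K) (s + 1) (s + 1) 1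
      rw [map_sub, map_smul, hQσ, hm, sub_self]
    simpa using mem_xDegreeLE_sub_one_of_xCoeff_eq_zero
      (sub_mem hQ (Submodule.smul_mem _ lam hmon)) hRσ
  have hsplit : ⁅Q, P⁆ = lam • ⁅wx K ^ (s + 1) * wy K, P⁆ + ⁅R, P⁆ := by
    simp only [R, Ring.lie_def, sub_mul, mul_sub, smul_mul_assoc, mul_smul_comm, smul_sub]
    abel
  rw [hsplit, map_add, map_smul, xCoeff_lie_wx_pow_mul_wy hP,
    xCoeff_eq_zero_of_mem (lie_mem_xDegreeLE hR hP) (by push_cast; omega), add_zero]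

theorem exists_xCoeff_sub_smul_pow_eq_zero [CharZero K] (hlam : lam ≠ 0)
    (hQ : Q ∈ xDegreeLE (s + 1 : ℕ)) (hQσ : xCoeff (s + 1) Q = lam • X) {t : ℕ} {P : Weyl K}
    (hg : (t : K) • xCoeff t P = ((s + 1 : ℕ) : K) • (X * derivative (xCoeff t P))) :
    ∃ (d : K) (j : ℕ), Q ^ j ∈ xDegreeLE t ∧ xCoeff t (P - d • Q ^ j) = 0 := by
  by_cases hj : ∃ j, t = (s + 1) * j
  · obtain ⟨j, rfl⟩ := hj
    refine ⟨(xCoeff ((s + 1) * j) P).coeff j / lam ^ j, j, pow_mem_xDegreeLE hQ j, ?_⟩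
    rw [map_sub, map_smul, xCoeff_pow hQ, hQσ, _root_.smul_pow, smul_smul,
      div_mul_cancel₀ _ (pow_ne_zero j hlam)]
    ext k
    rw [coeff_sub, coeff_smul, coeff_X_pow, coeff_zero]
    split_ifs with hkj
    · rw [hkj, smul_eq_mul, mul_one, sub_self]
    · rw [smul_zero, sub_zero]
      exact coeff_eq_zero_of_smul_eq_smul_X_mul_derivative hg fun h =>
        hkj (Nat.eq_of_mul_eq_mul_left (by omega) h).symm
  · simp only [not_exists] at hj
    refine ⟨0, 0, by simpa using one_mem_xDegreeLE (K := K) (n := t) (by omega), ?_⟩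
    ext k
    rw [zero_smul, sub_zero, coeff_zero]
    exact coeff_eq_zero_of_smul_eq_smul_X_mul_derivative hg (hj k)

theorem exists_mem_xDegreeLE_sub_one_lie_eq_one [CharZero K] (hlam : lam ≠ 0)
    (hQ : Q ∈ xDegreeLE (s + 1 : ℕ)) (hQσ : xCoeff (s + 1) Q = lam • X) {t : ℕ} {P : Weyl K}
    (hP : P ∈ xDegreeLE t) (h : ⁅Q, P⁆ = 1) :
    ∃ P' ∈ xDegreeLE (K := K) (t - 1), ⁅Q, P'⁆ = 1 := by
  have hsym := xCoeff_lie_of_xCoeff_eq_smul_X hQ hQσ hP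
  rw [h, xCoeff_one] at hsym
  split_ifs at hsym with hst
  · obtain ⟨rfl, rfl⟩ : s = 0 ∧ t = 0 := by omega
    simpa using congrArg (coeff · 0) hsym
  have hg := sub_eq_zero.1 ((smul_eq_zero.1 hsym.symm).resolve_left hlam)
  obtain ⟨d, j, hj, hd⟩ := exists_xCoeff_sub_smul_pow_eq_zero hlam hQ hQσ hg
  refine ⟨P - d • Q ^ j,
    mem_xDegreeLE_sub_one_of_xCoeff_eq_zero (sub_mem hP (Submodule.smul_mem _ d hj)) hd, ?_⟩
  rw [Ring.lie_def] at h ⊢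
  have hexp : Q * (P - d • Q ^ j) - (P - d • Q ^ j) * Q =
      (Q * P - P * Q) - d • (Q * Q ^ j - Q ^ j * Q) := by
    simp only [mul_sub, sub_mul, mul_smul_comm, smul_mul_assoc, smul_sub]
    abel
  rw [hexp, h, (Commute.self_pow Q j).eq, sub_self, smul_zero, sub_zero]

theorem lie_ne_one [CharZero K] (hlam : lam ≠ 0) (hQ : Q ∈ xDegreeLE (s + 1 : ℕ))
    (hQσ : xCoeff (s + 1) Q = lam • X) (t : ℕ) :
    ∀ P : Weyl K, P ∈ xDegreeLE t → ⁅Q, P⁆ ≠ 1 := by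
  induction t with
  | zero =>
    intro P hP h
    obtain ⟨P', hP', h'⟩ := exists_mem_xDegreeLE_sub_one_lie_eq_one hlam hQ hQσ hP h
    rw [xDegreeLE_eq_bot (by simp), Submodule.mem_bot] at hP'
    rw [hP', Ring.lie_def, mul_zero, zero_mul, sub_zero] at h'
    exact zero_ne_one h'
  | succ t ih =>
    intro P hP h
    obtain ⟨P', hP', h'⟩ := exists_mem_xDegreeLE_sub_one_lie_eq_one hlam hQ hQσ hP h
    exact ih P' (by simpa using hP') h'

end LeadingTerm

end Weyl

open Weyl Polynomial

theorem stmt_7 [CharZero K] (P Q : Weyl K) (h : Q * P - P * Q = 1)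
    (a : (ℕ × ℕ) →₀ K) (hQ : Q = ∑ p ∈ a.support, a p • (wx K ^ p.1 * wy K ^ p.2))
    (s : ℕ) (hs : ∀ p ∈ a.support, p.1 ≤ s)
    (lam : K) (hlam : lam ≠ 0)
    (hlead : ∀ j : ℕ, a (s, j) = if j = 1 then lam else 0) :
    s = 0 := by
  have hQF : Q ∈ xDegreeLE s := hQ ▸ Submodule.sum_mem _ fun p hp =>
    Submodule.smul_mem _ _ (monomial_mem_xDegreeLE _ (by exact_mod_cast hs p hp))
  have hQσ : xCoeff s Q = lam • X := by
    ext k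
    rw [hQ, coeff_xCoeff_sum, hlead, coeff_smul, coeff_X]
    rcases eq_or_ne k 1 with rfl | hk
    · simp
    · simp [hk, hk.symm]
  obtain ⟨t, hP⟩ := exists_mem_xDegreeLE P
  by_contra hs0
  obtain ⟨s, rfl⟩ := Nat.exists_eq_succ_of_ne_zero hs0
  exact lie_ne_one hlam hQF hQσ t P hP ((Ring.lie_def Q P).trans h)
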